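/- arXiv:1411.3902 — 6 statements merged into one kernel-verified Lean document; each statement's English description precedes it below -/
import Mathlib

section
/- For every natural number n ≥ 4, Q(n) ≥ (⌊n/2⌋ − 1)! / 2^{⌊n/4⌋}; that is, there exists a family of at least (⌊n/2⌋ − 1)!/2^{⌊n/4⌋} Hamilton paths of the complete graph K_n on [n] = {1, …, n} such that any two distinct members of the family are crossing. -/
/-- The edge set of the Hamilton path of the complete graph on `Fin n` that visits
the vertices in the order `σ 0, σ 1, …, σ (n-1)`. -/
def hamPathEdges (n : ℕ) (σ : Equiv.Perm (Fin n)) : Finset (Sym2 (Fin n)) :=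
  Finset.univ.image (fun p : {i : Fin n // (i : ℕ) + 1 < n} =>
    s(σ p.1, σ ⟨(p.1 : ℕ) + 1, p.2⟩))

/-- `E` is the edge set of a Hamilton path of the complete graph on `Fin n`. -/
def IsHamPath (n : ℕ) (E : Finset (Sym2 (Fin n))) : Prop :=
  ∃ σ : Equiv.Perm (Fin n), E = hamPathEdges n σ

/-- Two Hamilton paths (given by their edge sets) are crossing if their union has
a vertex of degree 4. -/
def Crossing (n : ℕ) (E₁ E₂ : Finset (Sym2 (Fin n))) : Prop :=
  ∃ v : Fin n, ((E₁ ∪ E₂).filter (fun e => v ∈ e)).card = 4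

/-!
Let the even vertices sit at the even positions of the path and let a permutation `σ` of the
`m = (n - 1) / 2` odd interior positions put the odd vertex `2σ(j)+1` at position `2j+1`. If the
paths of `σ ≠ τ` do not cross, every vertex has a common neighbour in both: at odd vertices this
means `σ` and `τ` place them in slots at distance at most one, at even vertices that two adjacent
slots share a value. Hence at the first disagreement `p` of `σ` and `τ`, `τ` agrees with `σ`
composed with the transposition `(p p+1)` on `0, …, p + 2`. This is ruled out by requiring that each
triple `σ(2k), σ(2k+1), σ(2k+2)` with `k < m / 2` be cyclically ordered, since a transposition of
two entries of a triple reverses its orientation. Swapping the slots `2k` and `2k+1` enforces the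
`k`-th condition without disturbing the later ones, so at least `m! / 2^(m/2)` permutations qualify.
-/

open Finset Equiv

section Incidence

variable {α : Type*} [Fintype α] [DecidableEq α]

def neighbors (E : Finset (Sym2 α)) (v : α) : Finset α :=
  univ.filter fun w => s(v, w) ∈ E

lemma neighbors_union (E₁ E₂ : Finset (Sym2 α)) (v : α) :
    neighbors (E₁ ∪ E₂) v = neighbors E₁ v ∪ neighbors E₂ v := by
  simp only [neighbors, mem_union, filter_or]

lemma card_filter_mem_eq_card_neighbors (E : Finset (Sym2 α)) (v : α) :
    (E.filter fun e => v ∈ e).card = (neighbors E v).card := by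
  have : E.filter (fun e => v ∈ e) = (neighbors E v).image (fun w => s(v, w)) := by
    ext e
    simp only [mem_filter, mem_image, neighbors, mem_univ, true_and, Sym2.mem_iff_exists]
    constructor
    · rintro ⟨he, w, rfl⟩
      exact ⟨w, he, rfl⟩
    · rintro ⟨w, hw, rfl⟩
      exact ⟨hw, w, rfl⟩
  rw [this, card_image_of_injective _ fun _ _ => Sym2.congr_right.mp]

end Incidence

lemma crossing_of_disjoint_neighbors {n : ℕ} {E₁ E₂ : Finset (Sym2 (Fin n))} {v : Fin n}
    (h₁ : (neighbors E₁ v).card = 2) (h₂ : (neighbors E₂ v).card = 2)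
    (hd : Disjoint (neighbors E₁ v) (neighbors E₂ v)) : Crossing n E₁ E₂ :=
  ⟨v, by
    rw [card_filter_mem_eq_card_neighbors, neighbors_union, card_union_of_disjoint hd, h₁, h₂]⟩

section HamPath

variable {n : ℕ} (σ : Perm (Fin n))

lemma mem_neighbors_hamPathEdges {i j : Fin n} :
    σ j ∈ neighbors (hamPathEdges n σ) (σ i) ↔ (j : ℕ) + 1 = i ∨ (i : ℕ) + 1 = j := by
  simp only [neighbors, hamPathEdges, mem_filter, mem_univ, true_and, mem_image, Sym2.eq_iff,
    σ.injective.eq_iff, Subtype.exists]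
  constructor
  · rintro ⟨a, ha, h⟩
    simp only [Fin.ext_iff] at h
    omega
  · rintro (h | h)
    · exact ⟨j, by omega, Or.inr ⟨rfl, Fin.ext h⟩⟩
    · exact ⟨i, by omega, Or.inl ⟨rfl, Fin.ext h⟩⟩

lemma card_neighbors_hamPathEdges_le (i : Fin n) :
    (neighbors (hamPathEdges n σ) (σ i)).card ≤ 2 := by
  calc (neighbors (hamPathEdges n σ) (σ i)).card
      ≤ ({(i : ℕ) - 1, (i : ℕ) + 1} : Finset ℕ).card := by
        refine card_le_card_of_injOn (fun w => (σ.symm w : ℕ)) (fun w hw => ?_) ?_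
        · rw [← σ.apply_symm_apply w, mem_coe, mem_neighbors_hamPathEdges] at hw
          simp only [coe_insert, coe_singleton, Set.mem_insert_iff, Set.mem_singleton_iff]
          omega
        · intro w _ w' _ h
          simpa using Fin.ext h
    _ ≤ 2 := card_le_two

lemma neighbors_hamPathEdges {a i b : Fin n} (ha : (a : ℕ) + 1 = i) (hb : (i : ℕ) + 1 = b) :
    neighbors (hamPathEdges n σ) (σ i) = {σ a, σ b} := by
  ext w
  rw [← σ.apply_symm_apply w, mem_neighbors_hamPathEdges]
  simp only [mem_insert, mem_singleton, σ.injective.eq_iff, Fin.ext_iff]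
  omega

lemma not_crossing_self : ¬ Crossing n (hamPathEdges n σ) (hamPathEdges n σ) := by
  rintro ⟨v, hv⟩
  rw [union_self, card_filter_mem_eq_card_neighbors, ← σ.apply_symm_apply v] at hv
  have := card_neighbors_hamPathEdges_le σ (σ.symm v)
  omega

end HamPath

lemma eq_or_eq_of_not_crossing {n : ℕ} {σ τ : Perm (Fin n)}
    (h : ¬ Crossing n (hamPathEdges n σ) (hamPathEdges n τ)) {a i b a' i' b' : Fin n}
    (ha : (a : ℕ) + 1 = i) (hb : (i : ℕ) + 1 = b) (ha' : (a' : ℕ) + 1 = i')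
    (hb' : (i' : ℕ) + 1 = b') (hv : σ i = τ i') :
    σ a = τ a' ∨ σ a = τ b' ∨ σ b = τ a' ∨ σ b = τ b' := by
  have hab : a ≠ b := fun h => by simp [h] at ha; omega
  have hab' : a' ≠ b' := fun h => by simp [h] at ha'; omega
  by_contra hd
  refine h (crossing_of_disjoint_neighbors (v := σ i) ?_ ?_ ?_)
  · rw [neighbors_hamPathEdges σ ha hb, card_pair (σ.injective.ne hab)]
  · rw [hv, neighbors_hamPathEdges τ ha' hb', card_pair (τ.injective.ne hab')]
  · rw [neighbors_hamPathEdges σ ha hb, hv, neighbors_hamPathEdges τ ha' hb']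
    simp only [disjoint_insert_left, disjoint_insert_right, disjoint_singleton, mem_insert,
      mem_singleton]
    tauto

section Extension

variable {m : ℕ} (σ : Perm (Fin m))

def extendNat : Perm ℕ := σ.extendDomain Fin.equivSubtype

lemma extendNat_apply_of_lt {j : ℕ} (hj : j < m) : extendNat σ j = σ ⟨j, hj⟩ :=
  σ.extendDomain_apply_image Fin.equivSubtype ⟨j, hj⟩

lemma extendNat_apply_of_le {j : ℕ} (hj : m ≤ j) : extendNat σ j = j :=
  σ.extendDomain_apply_not_subtype Fin.equivSubtype (by omega)

lemma extendNat_lt_iff {j : ℕ} : extendNat σ j < m ↔ j < m := by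
  by_cases hj : j < m
  · simp [extendNat_apply_of_lt σ hj, hj]
  · rw [extendNat_apply_of_le σ (by omega)]

lemma extendNat_injective : Function.Injective (extendNat (m := m)) :=
  Perm.extendDomainHom_injective Fin.equivSubtype

lemma extendNat_mul_swap (i j : Fin m) :
    extendNat (σ * swap i j) = extendNat σ * swap (i : ℕ) j := by
  rw [extendNat, ← Perm.extendDomain_mul]
  congr 1
  ext q
  change extendNat (swap i j) q = _
  by_cases hq : q < m
  · rw [extendNat_apply_of_lt _ hq, swap_apply_def, swap_apply_def]
    simp only [Fin.ext_iff]
    split_ifs <;> simp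
  · rw [extendNat_apply_of_le _ (by omega), swap_apply_of_ne_of_ne] <;> omega

end Extension

def oddPositions (n : ℕ) :
    Fin ((n - 1) / 2) ≃ {p : Fin n // (p : ℕ) % 2 = 1 ∧ (p : ℕ) + 1 < n} where
  toFun j := ⟨⟨2 * j + 1, by omega⟩, by simp, by simp; omega⟩
  invFun p := ⟨p.1 / 2, by omega⟩
  left_inv j := by ext; simp; omega
  right_inv p := by ext; simp; omega

/-- The path `0, 2σ(0)+1, 2, 2σ(1)+1, 4, …`: even positions carry themselves, the `(n - 1) / 2`
odd positions `2j+1` that are not endpoints carry `2σ(j)+1`. -/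
def pathPerm (n : ℕ) (σ : Perm (Fin ((n - 1) / 2))) : Perm (Fin n) :=
  σ.extendDomain (oddPositions n)

section PathPerm

variable {n : ℕ} (σ : Perm (Fin ((n - 1) / 2)))

lemma pathPerm_even {i : ℕ} (h : 2 * i < n) : pathPerm n σ ⟨2 * i, h⟩ = ⟨2 * i, h⟩ :=
  σ.extendDomain_apply_not_subtype _ (by simp)

lemma pathPerm_odd {j : ℕ} (h : 2 * j + 1 < n) :
    (pathPerm n σ ⟨2 * j + 1, h⟩ : ℕ) = 2 * extendNat σ j + 1 := by
  by_cases hj : j < (n - 1) / 2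
  · rw [extendNat_apply_of_lt σ hj]
    exact congrArg (fun p => (p.1 : ℕ)) (σ.extendDomain_apply_image (oddPositions n) ⟨j, hj⟩)
  · rw [pathPerm, σ.extendDomain_apply_not_subtype _ (by simp; omega),
      extendNat_apply_of_le σ (by omega)]

end PathPerm

section AdjacentSwap

variable {π π' : Perm ℕ}

lemma swap_of_first_disagreement (hslot : ∀ j j', π j = π' j' → j ≤ j' + 1 ∧ j' ≤ j + 1)
    {p : ℕ} (hne : π p ≠ π' p) (hguard : ∀ q, q + 1 = p → π q ≠ π' p ∧ π' q ≠ π p) :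
    π' p = π (p + 1) ∧ π' (p + 1) = π p := by
  constructor
  · have hr : π (π.symm (π' p)) = π' p := π.apply_symm_apply _
    have hrp : π.symm (π' p) ≠ p := fun h => hne (by rwa [h] at hr)
    have hr' : ¬ π.symm (π' p) + 1 = p := fun h => (hguard _ h).1 hr
    have := hslot _ _ hr
    rw [← hr, show π.symm (π' p) = p + 1 by omega]
  · have hq : π' (π'.symm (π p)) = π p := π'.apply_symm_apply _
    have hqp : π'.symm (π p) ≠ p := fun h => hne (by rw [h] at hq; exact hq.symm)
    have hq' : ¬ π'.symm (π p) + 1 = p := fun h => (hguard _ h).2 hq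
    have := hslot _ _ hq.symm
    rw [← hq, show π'.symm (π p) = p + 1 by omega]

/-- `hslot` and `hhub` are what non-crossing says at the odd and at the even positions of the
paths built from `π` and `π'` (see `pathPerm`). -/
lemma exists_adjacent_swap (hslot : ∀ j j', π j = π' j' → j ≤ j' + 1 ∧ j' ≤ j + 1)
    (hhub : ∀ i, π i = π' i ∨ π i = π' (i + 1) ∨ π (i + 1) = π' i ∨ π (i + 1) = π' (i + 1))
    (hne : π ≠ π') :
    ∃ p, (∀ q < p, π q = π' q) ∧ π' p = π (p + 1) ∧ π' (p + 1) = π p ∧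
      π' (p + 2) = π (p + 2) := by
  have hex : ∃ p, π p ≠ π' p := by
    by_contra h
    push Not at h
    exact hne (Equiv.ext h)
  have hprefix : ∀ q < Nat.find hex, π q = π' q := fun q hq => not_not.mp (Nat.find_min hex hq)
  obtain ⟨h₁, h₂⟩ := swap_of_first_disagreement hslot (Nat.find_spec hex) fun q hq =>
    ⟨by rw [hprefix q (by omega)]; exact π'.injective.ne (by omega),
      by rw [← hprefix q (by omega)]; exact π.injective.ne (by omega)⟩
  refine ⟨Nat.find hex, hprefix, h₁, h₂, ?_⟩
  rcases hhub (Nat.find hex + 1) with h | h | h | h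
  · exact absurd (π'.injective (h₁.trans h)) (by omega)
  · exact absurd (π'.injective (h₁.trans h)) (by omega)
  · exact absurd (π.injective (h.trans h₂)) (by omega)
  · exact h.symm

end AdjacentSwap

section CyclicOrder

variable {α : Type*} [LinearOrder α]

def CyclicallyOrdered (a b c : α) : Prop :=
  (a < b ∧ b < c) ∨ (b < c ∧ c < a) ∨ (c < a ∧ a < b)

variable {a b c : α}

lemma cyclicallyOrdered_swap_left (hab : a ≠ b) (hac : a ≠ c) (hbc : b ≠ c) :
    CyclicallyOrdered b a c ↔ ¬ CyclicallyOrdered a b c := by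
  unfold CyclicallyOrdered
  grind

lemma cyclicallyOrdered_swap_right (hab : a ≠ b) (hac : a ≠ c) (hbc : b ≠ c) :
    CyclicallyOrdered a c b ↔ ¬ CyclicallyOrdered a b c := by
  unfold CyclicallyOrdered
  grind

end CyclicOrder

section NotCrossing

variable {n : ℕ} {σ τ : Perm (Fin ((n - 1) / 2))}

lemma slot_le_succ_of_not_crossing
    (h : ¬ Crossing n (hamPathEdges n (pathPerm n σ)) (hamPathEdges n (pathPerm n τ)))
    {j j' : ℕ} (hjj : extendNat σ j = extendNat τ j') : j ≤ j' + 1 ∧ j' ≤ j + 1 := by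
  have := extendNat_lt_iff σ (j := j)
  have := extendNat_lt_iff τ (j := j')
  by_cases hj : j < (n - 1) / 2 ∧ j' < (n - 1) / 2
  · have := eq_or_eq_of_not_crossing h (a := ⟨2 * j, by omega⟩) (i := ⟨2 * j + 1, by omega⟩)
      (b := ⟨2 * (j + 1), by omega⟩) (a' := ⟨2 * j', by omega⟩) (i' := ⟨2 * j' + 1, by omega⟩)
      (b' := ⟨2 * (j' + 1), by omega⟩) rfl (by simp; omega) rfl (by simp; omega)
      (Fin.ext (by rw [pathPerm_odd, pathPerm_odd, hjj]))
    simp only [pathPerm_even, Fin.ext_iff] at this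
    omega
  · rw [extendNat_apply_of_le σ (by omega), extendNat_apply_of_le τ (by omega)] at hjj
    omega

lemma hub_of_not_crossing
    (h : ¬ Crossing n (hamPathEdges n (pathPerm n σ)) (hamPathEdges n (pathPerm n τ)))
    (i : ℕ) :
    extendNat σ i = extendNat τ i ∨ extendNat σ i = extendNat τ (i + 1) ∨
      extendNat σ (i + 1) = extendNat τ i ∨ extendNat σ (i + 1) = extendNat τ (i + 1) := by
  by_cases hi : 2 * (i + 1) + 1 < n
  · have := eq_or_eq_of_not_crossing h (a := ⟨2 * i + 1, by omega⟩)
      (i := ⟨2 * (i + 1), by omega⟩) (b := ⟨2 * (i + 1) + 1, hi⟩) (a' := ⟨2 * i + 1, by omega⟩)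
      (i' := ⟨2 * (i + 1), by omega⟩) (b' := ⟨2 * (i + 1) + 1, hi⟩) (by simp; omega) rfl
      (by simp; omega) rfl (by rw [pathPerm_even, pathPerm_even])
    simp only [Fin.ext_iff, pathPerm_odd] at this
    omega
  · right; right; right
    rw [extendNat_apply_of_le σ (by omega), extendNat_apply_of_le τ (by omega)]

end NotCrossing

def CyclicFrom (r K : ℕ) (π : ℕ → ℕ) : Prop :=
  ∀ k, r ≤ k → k < K → CyclicallyOrdered (π (2 * k)) (π (2 * k + 1)) (π (2 * k + 2))

lemma not_cyclicFrom_of_adjacent_swap {π π' : Perm ℕ} {K p : ℕ} (hp : p / 2 < K)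
    (hπ : CyclicFrom 0 K π) (hπ' : CyclicFrom 0 K π') (hprefix : ∀ q < p, π q = π' q)
    (h₁ : π' p = π (p + 1)) (h₂ : π' (p + 1) = π p) (h₃ : π' (p + 2) = π (p + 2)) : False := by
  obtain ⟨k, rfl | rfl⟩ := Nat.even_or_odd' p
  · have := hπ' k (Nat.zero_le _) (by omega)
    rw [h₁, h₂, h₃, cyclicallyOrdered_swap_left (π.injective.ne (by omega))
      (π.injective.ne (by omega)) (π.injective.ne (by omega))] at this
    exact this (hπ k (Nat.zero_le _) (by omega))
  · have := hπ' k (Nat.zero_le _) (by omega)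
    rw [← hprefix (2 * k) (by omega), h₁, h₂, cyclicallyOrdered_swap_right
      (π.injective.ne (by omega)) (π.injective.ne (by omega)) (π.injective.ne (by omega))] at this
    exact this (hπ k (Nat.zero_le _) (by omega))

open Classical in
noncomputable def cyclicPerms (m r : ℕ) : Finset (Perm (Fin m)) :=
  univ.filter fun σ => CyclicFrom r (m / 2) (extendNat σ)

lemma mem_cyclicPerms {m r : ℕ} {σ : Perm (Fin m)} :
    σ ∈ cyclicPerms m r ↔ CyclicFrom r (m / 2) (extendNat σ) := by
  classical
  simp [cyclicPerms]

theorem crossing_of_mem_cyclicPerms {n : ℕ} {σ τ : Perm (Fin ((n - 1) / 2))}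
    (hσ : σ ∈ cyclicPerms _ 0) (hτ : τ ∈ cyclicPerms _ 0) (hne : σ ≠ τ) :
    Crossing n (hamPathEdges n (pathPerm n σ)) (hamPathEdges n (pathPerm n τ)) := by
  by_contra h
  obtain ⟨p, hprefix, h₁, h₂, h₃⟩ := exists_adjacent_swap
    (fun _ _ => slot_le_succ_of_not_crossing h) (hub_of_not_crossing h)
    (extendNat_injective.ne hne)
  have hp : p + 1 < (n - 1) / 2 := by
    by_contra hp
    have := extendNat_lt_iff σ (j := p)
    rw [extendNat_apply_of_le τ (by omega)] at h₂
    rcases lt_or_ge p ((n - 1) / 2) with hpm | hpm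
    · omega
    · rw [extendNat_apply_of_le σ hpm] at h₂
      omega
  exact not_cyclicFrom_of_adjacent_swap (by omega) (mem_cyclicPerms.1 hσ) (mem_cyclicPerms.1 hτ)
    hprefix h₁ h₂ h₃

lemma card_le_two_mul_card_of_mul_mem {G : Type*} [Group G] [DecidableEq G] {s t : Finset G}
    (g : G) (hst : s ⊆ t) (h : ∀ x ∈ t, x ∉ s → x * g ∈ s) : t.card ≤ 2 * s.card := by
  calc t.card = (t \ s).card + s.card := (card_sdiff_add_card_eq_card hst).symm
    _ ≤ s.card + s.card := Nat.add_le_add_right (card_le_card_of_injOn (· * g)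
        (fun x hx => h x (mem_sdiff.1 hx).1 (mem_sdiff.1 hx).2) (mul_left_injective g).injOn) _
    _ = 2 * s.card := (two_mul _).symm

lemma cyclicFrom_mul_swap {π : Perm ℕ} {r K : ℕ} (h : CyclicFrom (r + 1) K π)
    (h' : ¬ CyclicFrom r K π) : CyclicFrom r K (π * swap (2 * r) (2 * r + 1) : Perm ℕ) := by
  intro k hrk hkK
  simp only [Perm.mul_apply]
  rcases hrk.eq_or_lt with rfl | hrk
  · rw [swap_apply_left, swap_apply_right, swap_apply_of_ne_of_ne (by omega) (by omega),
      cyclicallyOrdered_swap_left (π.injective.ne (by omega)) (π.injective.ne (by omega))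
        (π.injective.ne (by omega))]
    intro hr'
    refine h' fun k hrk hkK => ?_
    rcases hrk.eq_or_lt with rfl | hrk
    · exact hr'
    · exact h k hrk hkK
  · rw [swap_apply_of_ne_of_ne (by omega) (by omega),
      swap_apply_of_ne_of_ne (by omega) (by omega), swap_apply_of_ne_of_ne (by omega) (by omega)]
    exact h k hrk hkK

lemma card_cyclicPerms_succ_le {m r : ℕ} (hr : r < m / 2) :
    (cyclicPerms m (r + 1)).card ≤ 2 * (cyclicPerms m r).card := by
  classical
  refine card_le_two_mul_card_of_mul_mem (swap ⟨2 * r, by omega⟩ ⟨2 * r + 1, by omega⟩)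
    (fun σ hσ => mem_cyclicPerms.2 fun k hk => mem_cyclicPerms.1 hσ k (by omega))
    fun σ hσ hσ' => ?_
  rw [mem_cyclicPerms, extendNat_mul_swap]
  exact cyclicFrom_mul_swap (mem_cyclicPerms.1 hσ) (mt mem_cyclicPerms.2 hσ')

lemma factorial_le_two_pow_mul_card_cyclicPerms (m : ℕ) :
    m.factorial ≤ 2 ^ (m / 2) * (cyclicPerms m 0).card := by
  have key : ∀ r ≤ m / 2, (cyclicPerms m r).card ≤ 2 ^ r * (cyclicPerms m 0).card := by
    intro r
    induction r with
    | zero => simp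
    | succ r ih =>
      intro hr
      calc (cyclicPerms m (r + 1)).card ≤ 2 * (cyclicPerms m r).card :=
            card_cyclicPerms_succ_le (by omega)
        _ ≤ 2 * (2 ^ r * (cyclicPerms m 0).card) := by gcongr; exact ih (by omega)
        _ = 2 ^ (r + 1) * (cyclicPerms m 0).card := by ring
  have huniv : cyclicPerms m (m / 2) = univ :=
    eq_univ_of_forall fun σ => mem_cyclicPerms.2 fun k hk hk' => absurd hk' (by omega)
  calc m.factorial = (cyclicPerms m (m / 2)).card := by
        rw [huniv, card_univ, Fintype.card_perm, Fintype.card_fin]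
    _ ≤ 2 ^ (m / 2) * (cyclicPerms m 0).card := key _ le_rfl

theorem stmt0_general (n : ℕ) :
    ∃ F : Finset (Finset (Sym2 (Fin n))),
      (∀ E ∈ F, IsHamPath n E) ∧
      (∀ E₁ ∈ F, ∀ E₂ ∈ F, E₁ ≠ E₂ → Crossing n E₁ E₂) ∧
      (Nat.factorial (n / 2 - 1) : ℝ) / 2 ^ (n / 4) ≤ (F.card : ℝ) := by
  classical
  have hcross := @crossing_of_mem_cyclicPerms n
  refine ⟨(cyclicPerms _ 0).image fun σ => hamPathEdges n (pathPerm n σ), ?_, ?_, ?_⟩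
  · simp only [mem_image]
    rintro _ ⟨σ, -, rfl⟩
    exact ⟨_, rfl⟩
  · simp only [mem_image]
    rintro _ ⟨σ, hσ, rfl⟩ _ ⟨τ, hτ, rfl⟩ hne
    exact hcross hσ hτ fun h => hne (h ▸ rfl)
  · have hinj : Set.InjOn (fun σ => hamPathEdges n (pathPerm n σ))
        (cyclicPerms ((n - 1) / 2) 0 : Set _) :=
      fun σ hσ τ hτ h => by_contra fun hne => by
        have := hcross hσ hτ hne
        simp only at h
        exact not_crossing_self _ (h ▸ this)
    have hcount : (n / 2 - 1).factorial ≤ 2 ^ (n / 4) * (cyclicPerms ((n - 1) / 2) 0).card :=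
      calc (n / 2 - 1).factorial ≤ ((n - 1) / 2).factorial := Nat.factorial_le (by omega)
        _ ≤ 2 ^ ((n - 1) / 2 / 2) * (cyclicPerms _ 0).card :=
          factorial_le_two_pow_mul_card_cyclicPerms _
        _ ≤ 2 ^ (n / 4) * (cyclicPerms _ 0).card :=
          Nat.mul_le_mul_right _ (Nat.pow_le_pow_right two_pos (by omega))
    rw [card_image_of_injOn hinj, div_le_iff₀ (by positivity), mul_comm]
    exact_mod_cast hcount

/-- For every `n ≥ 4` there is a family of at least `(⌊n/2⌋ − 1)! / 2^(⌊n/4⌋)`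
Hamilton paths of `K_n`, any two distinct members of which are crossing. -/
theorem stmt0 (n : ℕ) (hn : 4 ≤ n) :
    ∃ F : Finset (Finset (Sym2 (Fin n))),
      (∀ E ∈ F, IsHamPath n E) ∧
      (∀ E₁ ∈ F, ∀ E₂ ∈ F, E₁ ≠ E₂ → Crossing n E₁ E₂) ∧
      (Nat.factorial (n / 2 - 1) : ℝ) / 2 ^ (n / 4) ≤ (F.card : ℝ) :=
  stmt0_general n
end

section
/- For every n ≥ 3, M(F_cy, D_3, n) ≥ (n−2)!; that is, there exists a family of at least (n−2)! Hamilton cycles of K_n such that the union of any two distinct members of the family has a vertex of degree 3. -/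
/-- The edge set of the Hamilton cycle of the complete graph on `Fin n` that visits
the vertices cyclically in the order `σ 0, σ 1, …, σ (n-1), σ 0`. -/
def hamCycleEdges (n : ℕ) (σ : Equiv.Perm (Fin n)) : Finset (Sym2 (Fin n)) :=
  Finset.univ.image (fun i : Fin n =>
    s(σ i, σ ⟨((i : ℕ) + 1) % n, Nat.mod_lt _ i.pos⟩))

/-- `E` is the edge set of a Hamilton cycle of the complete graph on `Fin n`. -/
def IsHamCycle (n : ℕ) (E : Finset (Sym2 (Fin n))) : Prop :=
  ∃ σ : Equiv.Perm (Fin n), E = hamCycleEdges n σ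

/-- The degree of the vertex `v` in the graph on `Fin n` with edge set `E`. -/
def degIn (n : ℕ) (E : Finset (Sym2 (Fin n))) (v : Fin n) : ℕ :=
  (E.filter (fun e => v ∈ e)).card

/-!
Take the `(n-2)!` Hamilton cycles whose cyclic vertex order `σ` starts with `σ 0 = 0`,
`σ 1 = 1`. For two distinct orders `σ ≠ τ`, agreement at two consecutive positions would
propagate all the way around, so some position `i` has `σ (i-1) = τ (i-1)`, `σ i = τ i`
and `σ (i+1) ≠ τ (i+1)`. The vertex `σ i` then keeps the common edge back to `σ (i-1)` and
gets the two different forward edges, hence degree 3 in the union. As a single Hamilton cycle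
is 2-regular, this also shows that distinct orders give distinct cycles.
-/

namespace Fin

open Fin.CommRing

variable {n : ℕ} [NeZero n]

theorem sub_one_ne_add_one (hn : 3 ≤ n) (i : Fin n) : i - 1 ≠ i + 1 := by
  intro h
  have h2 : (2 : Fin n) = 0 := by linear_combination -h
  have := congrArg Fin.val h2
  simp [Nat.mod_eq_of_lt (by omega : 2 < n)] at this

theorem exists_eq_eq_ne_of_ne {α : Type*} {f g : Fin n → α} (h₀ : f 0 = g 0) (h₁ : f 1 = g 1)
    (hfg : f ≠ g) : ∃ i, f (i - 1) = g (i - 1) ∧ f i = g i ∧ f (i + 1) ≠ g (i + 1) := by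
  by_contra! hprop
  have hpair : ∀ m : ℕ, f m = g m ∧ f (m + 1) = g (m + 1) := by
    intro m
    induction m with
    | zero => simpa using ⟨h₀, h₁⟩
    | succ m ih =>
      refine ⟨by simpa using ih.2, ?_⟩
      simpa using hprop (m + 1) (by simpa using ih.1) (by simpa using ih.2)
  exact hfg (funext fun x => by simpa using (hpair x).1)

end Fin

section HamCycle

variable {n : ℕ} [NeZero n]

theorem hamCycleEdges_eq_image (σ : Equiv.Perm (Fin n)) :
    hamCycleEdges n σ = Finset.univ.image fun i => s(σ i, σ (i + 1)) := by
  unfold hamCycleEdges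
  congr 1
  funext i
  simp [Fin.ext_iff, Fin.val_add]

theorem filter_mem_hamCycleEdges (σ : Equiv.Perm (Fin n)) (i : Fin n) :
    (hamCycleEdges n σ).filter (σ i ∈ ·) = {s(σ (i - 1), σ i), s(σ i, σ (i + 1))} := by
  rw [hamCycleEdges_eq_image]
  ext e
  simp only [Finset.mem_filter, Finset.mem_image, Finset.mem_univ, true_and,
    Finset.mem_insert, Finset.mem_singleton]
  constructor
  · rintro ⟨⟨m, rfl⟩, hm⟩
    rcases Sym2.mem_iff.mp hm with hm | hm
    · obtain rfl := σ.injective hm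
      exact Or.inr rfl
    · obtain rfl := σ.injective hm
      exact Or.inl (by simp)
  · rintro (rfl | rfl)
    · exact ⟨⟨i - 1, by simp⟩, by simp⟩
    · exact ⟨⟨i, rfl⟩, by simp⟩

theorem degIn_hamCycleEdges_le_two (σ : Equiv.Perm (Fin n)) (v : Fin n) :
    degIn n (hamCycleEdges n σ) v ≤ 2 := by
  obtain ⟨i, rfl⟩ := σ.surjective v
  rw [degIn, filter_mem_hamCycleEdges]
  exact Finset.card_le_two

theorem degIn_union_hamCycleEdges_eq_three (hn : 3 ≤ n) {σ τ : Equiv.Perm (Fin n)} {i : Fin n}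
    (hprev : σ (i - 1) = τ (i - 1)) (hi : σ i = τ i) (hnext : σ (i + 1) ≠ τ (i + 1)) :
    degIn n (hamCycleEdges n σ ∪ hamCycleEdges n τ) (σ i) = 3 := by
  have hσ := filter_mem_hamCycleEdges σ i
  have hτ := filter_mem_hamCycleEdges τ i
  rw [← hi, ← hprev] at hτ
  rw [degIn, Finset.filter_union, hσ, hτ, Finset.card_eq_three]
  refine ⟨s(σ (i - 1), σ i), s(σ i, σ (i + 1)), s(σ i, τ (i + 1)), ?_, ?_, ?_, ?_⟩
  · rw [Sym2.eq_swap, Ne, Sym2.congr_right]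
    exact σ.injective.ne (Fin.sub_one_ne_add_one hn i)
  · rw [Sym2.eq_swap, Ne, Sym2.congr_right, hprev]
    exact τ.injective.ne (Fin.sub_one_ne_add_one hn i)
  · rwa [Ne, Sym2.congr_right]
  · ext e
    simp only [Finset.mem_union, Finset.mem_insert, Finset.mem_singleton]
    tauto

theorem exists_degIn_union_hamCycleEdges_eq_three (hn : 3 ≤ n) {σ τ : Equiv.Perm (Fin n)}
    (h₀ : σ 0 = τ 0) (h₁ : σ 1 = τ 1) (hστ : σ ≠ τ) :
    ∃ v, degIn n (hamCycleEdges n σ ∪ hamCycleEdges n τ) v = 3 := by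
  obtain ⟨i, hprev, hi, hnext⟩ :=
    Fin.exists_eq_eq_ne_of_ne h₀ h₁ fun h => hστ (Equiv.ext (congrFun h))
  exact ⟨σ i, degIn_union_hamCycleEdges_eq_three hn hprev hi hnext⟩

theorem eq_of_hamCycleEdges_eq (hn : 3 ≤ n) {σ τ : Equiv.Perm (Fin n)}
    (h₀ : σ 0 = τ 0) (h₁ : σ 1 = τ 1) (h : hamCycleEdges n σ = hamCycleEdges n τ) : σ = τ := by
  by_contra hστ
  obtain ⟨v, hv⟩ := exists_degIn_union_hamCycleEdges_eq_three hn h₀ h₁ hστ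
  have := degIn_hamCycleEdges_le_two σ v
  rw [← h, Finset.union_self] at hv
  omega

end HamCycle

/-- For every `n ≥ 3` there is a family of at least `(n−2)!` Hamilton cycles of `K_n`
such that the union of any two distinct members has a vertex of degree 3. -/
theorem stmt6 (n : ℕ) (hn : 3 ≤ n) :
    ∃ F : Finset (Finset (Sym2 (Fin n))),
      (∀ E ∈ F, IsHamCycle n E) ∧
      (∀ E₁ ∈ F, ∀ E₂ ∈ F, E₁ ≠ E₂ → ∃ v : Fin n, degIn n (E₁ ∪ E₂) v = 3) ∧
      Nat.factorial (n - 2) ≤ F.card := by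
  have : NeZero n := ⟨by omega⟩
  set S : Finset (Fin n) := {0, 1}
  let cycle (ρ : Equiv.Perm {x // x ∉ S}) := hamCycleEdges n (Equiv.Perm.ofSubtype ρ)
  have hfix (ρ : Equiv.Perm {x // x ∉ S}) (x : Fin n) (hx : x ∈ S) :
      Equiv.Perm.ofSubtype ρ x = x :=
    Equiv.Perm.ofSubtype_apply_of_not_mem ρ (not_not.mpr hx)
  have hcycle_inj : Function.Injective cycle := fun ρ ρ' h =>
    Equiv.Perm.ofSubtype_injective <| eq_of_hamCycleEdges_eq hn
      (by simp [hfix, S]) (by simp [hfix, S]) h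
  have hS : S.card = 2 :=
    Finset.card_pair (by simp [Fin.ext_iff, Nat.mod_eq_of_lt (by omega : 1 < n)])
  refine ⟨Finset.univ.image cycle, ?_, ?_, ?_⟩
  · simp only [Finset.mem_image, Finset.mem_univ, true_and]
    rintro _ ⟨ρ, rfl⟩
    exact ⟨_, rfl⟩
  · simp only [Finset.mem_image, Finset.mem_univ, true_and]
    rintro _ ⟨ρ, rfl⟩ _ ⟨ρ', rfl⟩ h
    exact exists_degIn_union_hamCycleEdges_eq_three hn (by simp [hfix, S]) (by simp [hfix, S])
      fun h' => h (by simp only [cycle, h'])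
  · rw [Finset.card_image_of_injective _ hcycle_inj, Finset.card_univ, Fintype.card_perm,
      Fintype.card_subtype_compl, Fintype.card_coe, hS, Fintype.card_fin]
end

section
/- For every n ≥ 4, R(n) ≤ n!/2^{⌊n/2⌋}; that is, any family of permutations of [n] that are pairwise two-separated has at most n!/2^{⌊n/2⌋} members. -/
/-- flip within blocks {2k,2k+1} on naturals -/
def fl (n : ℕ) (δ : ℕ → Bool) (p : ℕ) : ℕ :=
  if δ (p / 2) = true ∧ 2 * (p / 2) + 1 < n then 2 * (p / 2) + (1 - p % 2) else p

lemma fl_lt {n p : ℕ} (δ : ℕ → Bool) (hp : p < n) : fl n δ p < n := by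
  unfold fl; split
  · next h => omega
  · exact hp

lemma fl_invol (n : ℕ) (δ : ℕ → Bool) (p : ℕ) : fl n δ (fl n δ p) = p := by
  unfold fl
  by_cases h : δ (p / 2) = true ∧ 2 * (p / 2) + 1 < n
  · rw [if_pos h]
    have hq2 : (2 * (p / 2) + (1 - p % 2)) / 2 = p / 2 := by omega
    rw [hq2, if_pos h]
    omega
  · rw [if_neg h, if_neg h]

lemma fl_comp (n : ℕ) (δ δ' : ℕ → Bool) (p : ℕ) :
    fl n δ (fl n δ' p) = fl n (fun k => δ k != δ' k) p := by
  by_cases hv : 2 * (p / 2) + 1 < n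
  · cases h' : δ' (p / 2)
    · have h1 : fl n δ' p = p := by unfold fl; rw [if_neg]; simp [h']
      rw [h1]; unfold fl; simp [h']
    · have h1 : fl n δ' p = 2 * (p / 2) + (1 - p % 2) := by
        unfold fl; rw [if_pos ⟨h', hv⟩]
      rw [h1]
      have hq2 : (2 * (p / 2) + (1 - p % 2)) / 2 = p / 2 := by omega
      have hqm : (2 * (p / 2) + (1 - p % 2)) % 2 = 1 - p % 2 := by omega
      unfold fl
      rw [hq2, hqm]
      cases h : δ (p / 2) <;> simp [h, h', hv] <;> omega
  · simp [fl, hv]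


lemma key {n : ℕ} (δ : ℕ → Bool) {i j : ℕ} (hj : j + 2 < n) (h : fl n δ j = i) :
    i + 1 = fl n δ (j + 1) ∨ i + 1 = fl n δ (j + 2) ∨
    i + 2 = fl n δ (j + 1) ∨ i + 2 = fl n δ (j + 2) := by
  rcases Nat.even_or_odd j with ⟨k, hk⟩ | ⟨k, hk⟩
  · subst hk
    have e1 : (k + k) / 2 = k := by omega
    have e2 : (k + k + 1) / 2 = k := by omega
    have e3 : (k + k + 2) / 2 = k + 1 := by omega
    have m1 : (k + k) % 2 = 0 := by omega
    have m2 : (k + k + 1) % 2 = 1 := by omega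
    have m3 : (k + k + 2) % 2 = 0 := by omega
    unfold fl at h ⊢
    rw [e1, m1] at h
    rw [e2, e3, m2, m3]
    cases hb : δ k <;> cases hb' : δ (k + 1) <;>
      simp only [hb, hb'] at h ⊢ <;> split_ifs at h ⊢ <;> simp_all <;> omega
  · subst hk
    have e1 : (2 * k + 1) / 2 = k := by omega
    have e2 : (2 * k + 1 + 1) / 2 = k + 1 := by omega
    have e3 : (2 * k + 1 + 2) / 2 = k + 1 := by omega
    have m1 : (2 * k + 1) % 2 = 1 := by omega
    have m2 : (2 * k + 1 + 1) % 2 = 0 := by omega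
    have m3 : (2 * k + 1 + 2) % 2 = 1 := by omega
    unfold fl at h ⊢
    rw [e1, m1] at h
    rw [e2, e3, m2, m3]
    cases hb : δ k <;> cases hb' : δ (k + 1) <;>
      simp only [hb, hb'] at h ⊢ <;> split_ifs at h ⊢ <;> simp_all <;> omega

/-- Two permutations `π'` and `π''` of `Fin n` (viewed as linear orders: `π i` is the
element in position `i`) are two-separated if some element `a` is followed immediately
by `x` then `y` in `π'` and immediately by `v` then `w` in `π''`, where `x, y, v, w`
are four pairwise distinct elements. -/
def TwoSeparated (n : ℕ) (π' π'' : Equiv.Perm (Fin n)) : Prop :=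
  ∃ i j : ℕ, ∃ hi : i + 2 < n, ∃ hj : j + 2 < n,
    π' ⟨i, by omega⟩ = π'' ⟨j, by omega⟩ ∧
    ({π' ⟨i + 1, by omega⟩, π' ⟨i + 2, hi⟩,
      π'' ⟨j + 1, by omega⟩, π'' ⟨j + 2, hj⟩} : Finset (Fin n)).card = 4

def sperm (n : ℕ) (δ : ℕ → Bool) : Equiv.Perm (Fin n) where
  toFun p := ⟨fl n δ p.val, fl_lt δ p.isLt⟩
  invFun p := ⟨fl n δ p.val, fl_lt δ p.isLt⟩
  left_inv p := Fin.ext (fl_invol n δ p.val)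
  right_inv p := Fin.ext (fl_invol n δ p.val)

lemma sperm_apply (n : ℕ) (δ : ℕ → Bool) (p : Fin n) :
    (sperm n δ p).val = fl n δ p.val := rfl

lemma sperm_mul (n : ℕ) (δ δ' : ℕ → Bool) :
    sperm n δ * sperm n δ' = sperm n (fun k => δ k != δ' k) := by
  ext p
  exact fl_comp n δ δ' p.val

lemma sperm_mul_self (n : ℕ) (δ : ℕ → Bool) : sperm n δ * sperm n δ = 1 := by
  ext p
  simp [sperm_apply, Equiv.Perm.mul_apply, fl_invol]

lemma card3 {α : Type*} [DecidableEq α] (a b c : α) : ({a, b, c} : Finset α).card ≤ 3 := by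
  have h1 := Finset.card_insert_le a ({b, c} : Finset α)
  have h2 := Finset.card_insert_le b ({c} : Finset α)
  have h3 : ({c} : Finset α).card = 1 := Finset.card_singleton c
  omega

lemma card_ne4 {α : Type*} [DecidableEq α] {x y v w : α}
    (h : x = v ∨ x = w ∨ y = v ∨ y = w) : ({x, y, v, w} : Finset α).card ≠ 4 := by
  have hle : ({x, y, v, w} : Finset α).card ≤ 3 := by
    rcases h with rfl | rfl | rfl | rfl
    · refine le_trans (Finset.card_le_card ?_) (card3 x y w)
      intro z hz; simp at hz ⊢; tauto
    · refine le_trans (Finset.card_le_card ?_) (card3 x y v)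
      intro z hz; simp at hz ⊢; tauto
    · refine le_trans (Finset.card_le_card ?_) (card3 x y w)
      intro z hz; simp at hz ⊢; tauto
    · refine le_trans (Finset.card_le_card ?_) (card3 x y v)
      intro z hz; simp at hz ⊢; tauto
  omega

lemma notTS (n : ℕ) (π : Equiv.Perm (Fin n)) (δ : ℕ → Bool) :
    ¬ TwoSeparated n π (π * sperm n δ) := by
  rintro ⟨i, j, hi, hj, heq, hcard⟩
  rw [Equiv.Perm.mul_apply] at heq
  have h2 : (⟨i, by omega⟩ : Fin n) = sperm n δ ⟨j, by omega⟩ := π.injective heq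
  have hfl : fl n δ j = i := (congrArg Fin.val h2).symm
  rcases key δ hj hfl with h | h | h | h
  · refine card_ne4 (Or.inl ?_) hcard
    rw [Equiv.Perm.mul_apply]
    exact congrArg π (Fin.ext h)
  · refine card_ne4 (Or.inr (Or.inl ?_)) hcard
    rw [Equiv.Perm.mul_apply]
    exact congrArg π (Fin.ext h)
  · refine card_ne4 (Or.inr (Or.inr (Or.inl ?_))) hcard
    rw [Equiv.Perm.mul_apply]
    exact congrArg π (Fin.ext h)
  · refine card_ne4 (Or.inr (Or.inr (Or.inr ?_))) hcard
    rw [Equiv.Perm.mul_apply]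
    exact congrArg π (Fin.ext h)

/-- For every `n ≥ 4`, any family of pairwise two-separated permutations of `[n]`
has at most `n! / 2^(⌊n/2⌋)` members. -/
theorem stmt10 (n : ℕ) (hn : 4 ≤ n) (F : Finset (Equiv.Perm (Fin n)))
    (hF : ∀ π₁ ∈ F, ∀ π₂ ∈ F, π₁ ≠ π₂ → TwoSeparated n π₁ π₂) :
    (F.card : ℝ) ≤ (Nat.factorial n : ℝ) / 2 ^ (n / 2) := by
  classical
  set m := n / 2 with hm
  let ext : (Fin m → Bool) → (ℕ → Bool) := fun δ k => if h : k < m then δ ⟨k, h⟩ else false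
  let Φ : Equiv.Perm (Fin n) × (Fin m → Bool) → Equiv.Perm (Fin n) :=
    fun p => p.1 * sperm n (ext p.2)
  have hinj : Set.InjOn Φ ↑(F ×ˢ (Finset.univ : Finset (Fin m → Bool))) := by
    rintro ⟨π, δ⟩ h1 ⟨π', δ'⟩ h2 heq
    simp only [Finset.coe_product, Set.mem_prod, Finset.mem_coe] at h1 h2
    simp only [Φ] at heq
    have hππ : π = π' := by
      by_contra hne
      have hTS := hF π h1.1 π' h2.1 hne
      have h3 : π * (sperm n (ext δ) * sperm n (ext δ')) = π' := by
        rw [← mul_assoc, heq, mul_assoc, sperm_mul_self, mul_one]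
      rw [sperm_mul] at h3
      exact notTS n π _ (h3 ▸ hTS)
    subst hππ
    have hs : sperm n (ext δ) = sperm n (ext δ') := mul_left_cancel heq
    have hδ : δ = δ' := by
      funext k
      have hk2 : 2 * k.val + 1 < n := by have := k.isLt; omega
      have := congrArg (fun e : Equiv.Perm (Fin n) => (e ⟨2 * k.val, by omega⟩).val) hs
      simp only [sperm_apply] at this
      unfold fl at this
      have e1 : 2 * k.val / 2 = k.val := by omega
      have e2 : 2 * k.val % 2 = 0 := by omega
      rw [e1, e2] at this
      have hd : ext δ k.val = δ k := by simp [ext, k.isLt]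
      have hd' : ext δ' k.val = δ' k := by simp [ext, k.isLt]
      rw [hd, hd'] at this
      cases h : δ k <;> cases h' : δ' k
      case false.false => rfl
      case false.true => simp [h, h', hk2] at this
      case true.false => simp [h, h', hk2] at this
      case true.true => rfl
    rw [hδ]
  have hcount := Finset.card_le_card_of_injOn Φ
      (fun a _ => Finset.mem_univ (Φ a)) hinj
  rw [Finset.card_product, Finset.card_univ, Finset.card_univ] at hcount
  have hc2 : Fintype.card (Fin m → Bool) = 2 ^ m := by simp
  have hperm : Fintype.card (Equiv.Perm (Fin n)) = n.factorial := by
    rw [Fintype.card_perm, Fintype.card_fin]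
  rw [hc2, hperm] at hcount
  rw [le_div_iff₀ (by positivity)]
  calc (F.card : ℝ) * 2 ^ m = ((F.card * 2 ^ m : ℕ) : ℝ) := by push_cast; ring
    _ ≤ (n.factorial : ℝ) := by exact_mod_cast hcount
end

section
/- For all sufficiently large n, R(n) ≥ n!/(n^{13} · 5^{n−10}); that is, there exists a family of at least n!/(n^{13} 5^{n−10}) permutations of [n] that are pairwise two-separated. -/
/-!
Pairwise two-separated families are independent sets of the relation `¬ TwoSeparated n`, which
is invariant under left multiplication. So every permutation is in conflict with exactly as
many permutations as the identity is, and a greedy choice gives a family of size at least `n!/D`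
for any bound `D` on that number.

If `σ` is not two-separated from the identity, then at every position `k` with `k + 2 < n` and
`σ k + 2 < n`, one of `σ (k + 1)`, `σ (k + 2)` lies in `{σ k + 1, σ k + 2}`: otherwise the
element `σ k` separates `σ` from the identity. Which of these four cases occurs at each position,
together with the values of `σ` at the last two positions and of `σ⁻¹` at the two largest
values, determines `σ` by downward induction on the position. Hence `D ≤ n⁴ 4ⁿ`, which is at most
`n¹³ 5ⁿ⁻¹⁰` for `n ≥ 13`.
-/

open Finset Equiv

theorem Finset.exists_pairwise_subset_card_le_mul {α : Type*} [DecidableEq α]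
    (c : α → α → Prop) [DecidableRel c] (hsymm : ∀ a b, c a b → c b a) (hirrefl : ∀ a, ¬ c a a)
    (D : ℕ) (A : Finset α) (hdeg : ∀ a ∈ A, #{b ∈ A | ¬ c a b} ≤ D) :
    ∃ S ⊆ A, (S : Set α).Pairwise c ∧ #A ≤ D * #S := by
  induction A using Finset.strongInduction with
  | H A ih =>
  rcases A.eq_empty_or_nonempty with rfl | ⟨v, hv⟩
  · exact ⟨∅, empty_subset _, by simp, by simp⟩
  set B := {b ∈ A | ¬ c v b}
  have hvB : v ∈ B := mem_filter.mpr ⟨hv, hirrefl v⟩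
  obtain ⟨S, hSA, hS, hcard⟩ := ih (A \ B) (sdiff_ssubset (filter_subset _ _) ⟨v, hvB⟩)
    fun a ha => (card_le_card (filter_subset_filter _ sdiff_subset)).trans
      (hdeg a (sdiff_subset ha))
  have hcompat : ∀ b ∈ S, c v b := fun b hb => by
    by_contra h
    exact (mem_sdiff.mp (hSA hb)).2 (mem_filter.mpr ⟨(mem_sdiff.mp (hSA hb)).1, h⟩)
  have hvS : v ∉ S := fun h => hirrefl v (hcompat v h)
  refine ⟨insert v S, insert_subset hv (hSA.trans sdiff_subset), ?_, ?_⟩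
  · rw [coe_insert, Set.pairwise_insert]
    exact ⟨hS, fun b hb _ => ⟨hcompat b hb, hsymm _ _ (hcompat b hb)⟩⟩
  · calc #A = #(A \ B) + #B := (card_sdiff_add_card_eq_card (filter_subset _ _)).symm
      _ ≤ D * #S + D := add_le_add hcard (hdeg v hv)
      _ = D * #(insert v S) := by rw [card_insert_of_notMem hvS, mul_add_one]

section Permutations

variable {n : ℕ}

theorem TwoSeparated.symm {π τ : Perm (Fin n)} (h : TwoSeparated n π τ) :
    TwoSeparated n τ π := by
  obtain ⟨i, j, hi, hj, heq, hcard⟩ := h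
  refine ⟨j, i, hj, hi, heq.symm, ?_⟩
  convert hcard using 2
  grind

theorem not_twoSeparated_self (π : Perm (Fin n)) : ¬ TwoSeparated n π π := by
  rintro ⟨i, j, hi, hj, heq, hcard⟩
  obtain rfl : i = j := Fin.val_eq_of_eq (π.injective heq)
  simp at hcard

theorem TwoSeparated.mul_left (ρ : Perm (Fin n)) {π τ : Perm (Fin n)}
    (h : TwoSeparated n π τ) : TwoSeparated n (ρ * π) (ρ * τ) := by
  obtain ⟨i, j, hi, hj, heq, hcard⟩ := h
  refine ⟨i, j, hi, hj, by simp [heq], ?_⟩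
  rw [← card_image_of_injective _ ρ.injective] at hcard
  simpa [image_insert] using hcard

theorem twoSeparated_mul_left_iff (ρ : Perm (Fin n)) {π τ : Perm (Fin n)} :
    TwoSeparated n (ρ * π) (ρ * τ) ↔ TwoSeparated n π τ :=
  ⟨fun h => by simpa using h.mul_left ρ⁻¹, TwoSeparated.mul_left ρ⟩

def IsShortStep (σ : Perm (Fin n)) (k : Fin n) (p : Fin 2 × Fin 2) : Prop :=
  ∃ j : Fin n, (j : ℕ) = k + p.1 + 1 ∧ (σ j : ℕ) = σ k + p.2 + 1

theorem exists_isShortStep {σ : Perm (Fin n)} (hσ : ¬ TwoSeparated n 1 σ) {k : Fin n}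
    (hk : k + 2 < n) (hv : σ k + 2 < n) : ∃ p, IsShortStep σ k p := by
  by_contra h
  simp only [IsShortStep, not_exists, Prod.forall, Fin.forall_fin_two, not_and, Fin.isValue,
    Fin.val_zero, Fin.val_one, add_zero] at h
  refine hσ ⟨σ k, k, hv, hk, rfl, card_eq_four.mpr ⟨_, _, _, _, ?_, ?_, ?_, ?_, ?_,
    σ.injective.ne (Fin.ne_of_val_ne (by simp)), rfl⟩⟩
  all_goals
    intro e
    simp only [Perm.one_apply, Fin.ext_iff] at e
    grind

noncomputable def stepCode (σ : Perm (Fin n)) (k : Fin n) : Fin 2 × Fin 2 :=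
  Classical.epsilon (IsShortStep σ k)

theorem isShortStep_stepCode {σ : Perm (Fin n)} (hσ : ¬ TwoSeparated n 1 σ) {k : Fin n}
    (hk : k + 2 < n) (hv : σ k + 2 < n) : IsShortStep σ k (stepCode σ k) :=
  Classical.epsilon_spec (exists_isShortStep hσ hk hv)

theorem eq_of_stepCode_eq {σ τ : Perm (Fin n)} (hσ : ¬ TwoSeparated n 1 σ)
    (hτ : ¬ TwoSeparated n 1 τ) (hpos : ∀ k : Fin n, n ≤ k + 2 → σ k = τ k)
    (hval : ∀ v : Fin n, n ≤ v + 2 → σ⁻¹ v = τ⁻¹ v) (hcode : stepCode σ = stepCode τ) :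
    σ = τ := by
  have hσ_large : ∀ k, n ≤ σ k + 2 → τ k = σ k := fun k hk => by
    simpa [Equiv.eq_symm_apply] using hval (σ k) hk
  have hτ_large : ∀ k, n ≤ τ k + 2 → σ k = τ k := fun k hk => by
    simpa [Equiv.eq_symm_apply] using (hval (τ k) hk).symm
  ext1 k
  induction k using WellFoundedGT.induction with
  | _ k ih =>
  by_cases hk : n ≤ k + 2
  · exact hpos k hk
  by_cases hσk : n ≤ σ k + 2
  · exact (hσ_large k hσk).symm
  by_cases hτk : n ≤ τ k + 2
  · exact hτ_large k hτk
  obtain ⟨j, hj, hσj⟩ := isShortStep_stepCode hσ (k := k) (by omega) (by omega)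
  obtain ⟨j', hj', hτj'⟩ := hcode ▸ isShortStep_stepCode hτ (k := k) (by omega) (by omega)
  obtain rfl : j = j' := Fin.ext (by omega)
  have := ih j (Fin.lt_def.mpr (by omega))
  exact Fin.ext (by rw [this] at hσj; omega)

def lastTwo {β : Type*} (hn : 0 < n) (f : Fin n → β) : Fin 2 → β :=
  fun i => f ⟨n - 1 - i, by omega⟩

theorem apply_eq_of_lastTwo_eq {β : Type*} {hn : 0 < n} {f g : Fin n → β}
    (h : lastTwo hn f = lastTwo hn g) {k : Fin n} (hk : n ≤ k + 2) : f k = g k := by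
  have hk' : (⟨n - 1 - (n - 1 - k), by omega⟩ : Fin n) = k := Fin.ext (by simp; omega)
  simpa [lastTwo, hk'] using congrFun h ⟨n - 1 - k, by omega⟩

noncomputable def collisionCode (hn : 0 < n) (σ : Perm (Fin n)) :
    (Fin 2 → Fin n) × (Fin 2 → Fin n) × (Fin n → Fin 2 × Fin 2) :=
  (lastTwo hn σ, lastTwo hn ⇑σ⁻¹, stepCode σ)

open Classical in
theorem card_not_twoSeparated_one_le (hn : 0 < n) :
    #{σ : Perm (Fin n) | ¬ TwoSeparated n 1 σ} ≤ n ^ 4 * 4 ^ n := by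
  refine (card_le_card_of_injOn (collisionCode hn) (fun _ _ => mem_univ _) ?_).trans_eq ?_
  · intro σ hσ τ hτ h
    simp only [coe_filter, mem_univ, true_and, Set.mem_ofPred_eq] at hσ hτ
    simp only [collisionCode, Prod.mk.injEq] at h
    exact eq_of_stepCode_eq hσ hτ (fun _ => apply_eq_of_lastTwo_eq h.1)
      (fun _ => apply_eq_of_lastTwo_eq h.2.1) h.2.2
  · simp [Fintype.card_prod]
    ring

open Classical in
theorem card_not_twoSeparated_le (hn : 0 < n) (π : Perm (Fin n)) :
    #{τ | ¬ TwoSeparated n π τ} ≤ n ^ 4 * 4 ^ n := by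
  calc #{τ | ¬ TwoSeparated n π τ} = #{σ : Perm (Fin n) | ¬ TwoSeparated n 1 σ} :=
        card_equiv (Equiv.mulLeft π⁻¹) fun τ => by
          simp [← twoSeparated_mul_left_iff π⁻¹ (π := π)]
    _ ≤ _ := card_not_twoSeparated_one_le hn

theorem pow_four_mul_four_pow_le (hn : 13 ≤ n) : n ^ 4 * 4 ^ n ≤ n ^ 13 * 5 ^ (n - 10) := by
  obtain ⟨m, rfl⟩ : ∃ m, n = m + 10 := ⟨n - 10, by omega⟩
  calc (m + 10) ^ 4 * 4 ^ (m + 10) ≤ (m + 10) ^ 4 * 5 ^ (m + 10) := by gcongr; norm_num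
    _ = (m + 10) ^ 4 * (5 ^ 10 * 5 ^ m) := by ring
    _ ≤ (m + 10) ^ 4 * ((m + 10) ^ 9 * 5 ^ m) := by
        have : 5 ^ 10 ≤ (m + 10) ^ 9 := (by norm_num : 5 ^ 10 ≤ 13 ^ 9).trans (by gcongr)
        gcongr
    _ = (m + 10) ^ 13 * 5 ^ (m + 10 - 10) := by rw [Nat.add_sub_cancel]; ring

end Permutations

/-- For all sufficiently large `n`, there exists a family of at least
`n! / (n^13 · 5^(n−10))` permutations of `[n]` that are pairwise two-separated. -/
theorem stmt11 :
    ∃ N : ℕ, ∀ n : ℕ, N ≤ n →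
      ∃ F : Finset (Equiv.Perm (Fin n)),
        (∀ π₁ ∈ F, ∀ π₂ ∈ F, π₁ ≠ π₂ → TwoSeparated n π₁ π₂) ∧
        (Nat.factorial n : ℝ) / ((n : ℝ) ^ 13 * 5 ^ (n - 10)) ≤ (F.card : ℝ) := by
  classical
  refine ⟨13, fun n hn => ?_⟩
  obtain ⟨F, -, hF, hcard⟩ := exists_pairwise_subset_card_le_mul (TwoSeparated n)
    (fun _ _ => TwoSeparated.symm) not_twoSeparated_self (n ^ 4 * 4 ^ n) univ
    fun π _ => card_not_twoSeparated_le (by omega) π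
  rw [card_univ, Fintype.card_perm, Fintype.card_fin] at hcard
  refine ⟨F, hF, ?_⟩
  rw [div_le_iff₀ (by positivity)]
  exact_mod_cast hcard.trans
    (by rw [mul_comm]; exact Nat.mul_le_mul_left _ (pow_four_mul_four_pow_le hn))
end

section
/- If two permutations π' and π'' of [n] have the same couple order, then π' and π'' are not two-separated. -/
/-- The couple order of a permutation `π` of `Fin n`: the sequence of unordered pairs
`{π 0, π 1}, {π 2, π 3}, …, {π (2⌊n/2⌋ − 2), π (2⌊n/2⌋ − 1)}`. -/
def coupleOrder (n : ℕ) (π : Equiv.Perm (Fin n)) : Fin (n / 2) → Sym2 (Fin n) :=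
  fun k => s(π ⟨2 * (k : ℕ), by have := k.isLt; omega⟩,
             π ⟨2 * (k : ℕ) + 1, by have := k.isLt; omega⟩)

lemma card4 {α : Type*} [DecidableEq α] {x y v w : α}
    (h : ({x, y, v, w} : Finset α).card = 4) :
    x ≠ y ∧ x ≠ v ∧ x ≠ w ∧ y ≠ v ∧ y ≠ w ∧ v ≠ w := by
  have hle : ∀ a b c : α, ({a, b, c} : Finset α).card ≤ 3 := by
    intro a b c
    have h1 := Finset.card_insert_le a ({b, c} : Finset α)
    have h2 := Finset.card_insert_le b ({c} : Finset α)
    simp only [Finset.card_singleton] at h2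
    omega
  have key : ∀ a b c : α, ¬ (({x,y,v,w} : Finset α) ⊆ {a,b,c}) := by
    intro a b c hsub
    have := Finset.card_le_card hsub
    have := hle a b c
    omega
  refine ⟨?_, ?_, ?_, ?_, ?_, ?_⟩ <;> rintro rfl
  · exact key x v w (by intro z hz; simp at hz ⊢; tauto)
  · exact key x y w (by intro z hz; simp at hz ⊢; tauto)
  · exact key x y v (by intro z hz; simp at hz ⊢; tauto)
  · exact key x y w (by intro z hz; simp at hz ⊢; tauto)
  · exact key x y v (by intro z hz; simp at hz ⊢; tauto)
  · exact key x y v (by intro z hz; simp at hz ⊢; tauto)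

/-- If two permutations of `[n]` have the same couple order, then they are not
two-separated. -/
theorem stmt12 (n : ℕ) (π' π'' : Equiv.Perm (Fin n))
    (h : coupleOrder n π' = coupleOrder n π'') : ¬ TwoSeparated n π' π'' := by
  rintro ⟨i, j, hi, hj, ha, hcard⟩
  obtain ⟨hxy, hxv, hxw, hyv, hyw, hvw⟩ := card4 hcard
  have hc : ∀ k, ∀ hk : 2 * k + 1 < n,
      s(π' ⟨2 * k, by omega⟩, π' ⟨2 * k + 1, hk⟩) =
      s(π'' ⟨2 * k, by omega⟩, π'' ⟨2 * k + 1, hk⟩) := by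
    intro k hk
    have := congrFun h ⟨k, by omega⟩
    simpa [coupleOrder] using this
  have hc' : ∀ p q : ℕ, ∀ hp : p < n, ∀ hq : q < n, ∀ k, p = 2 * k → q = 2 * k + 1 →
      s(π' ⟨p, hp⟩, π' ⟨q, hq⟩) = s(π'' ⟨p, hp⟩, π'' ⟨q, hq⟩) := by
    rintro p q hp hq k rfl rfl
    exact hc k hq
  obtain ⟨k, hik⟩ : ∃ k, i = 2 * k ∨ i = 2 * k + 1 := ⟨i / 2, by omega⟩
  have hk1 : 2 * k + 1 < n := by omega
  have hpair := hc k hk1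
  rw [Sym2.eq_iff] at hpair
  rcases hik with hik | hik
  · subst hik
    rcases hpair with ⟨h1, h2⟩ | ⟨h1, h2⟩
    · -- matched: π'(2k+1) = π''(2k+1). Show j = 2k, then x = v.
      have hj2 : j = 2 * k := by
        have : (⟨2 * k, by omega⟩ : Fin n) = ⟨j, by omega⟩ :=
          π''.injective (by rw [← h1]; exact ha)
        exact ((Fin.mk.injEq _ _ _ _).mp this).symm
      subst hj2
      exact hxv h2
    · -- swapped: a = π''(2k+1), so j = 2k+1
      have hj2 : j = 2 * k + 1 := by
        have : (⟨2 * k + 1, hk1⟩ : Fin n) = ⟨j, by omega⟩ :=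
          π''.injective (by rw [← h1]; exact ha)
        exact ((Fin.mk.injEq _ _ _ _).mp this).symm
      subst hj2
      -- couple k+1 at positions j+1 = 2k+2, j+2 = 2k+3
      have hp2 := hc' (2 * k + 1 + 1) (2 * k + 1 + 2) (by omega) hj (k + 1)
        (by ring) (by ring)
      rw [Sym2.eq_iff] at hp2
      rcases hp2 with ⟨h3, _⟩ | ⟨h3, _⟩
      · exact hyv h3
      · exact hyw h3
  · subst hik
    rcases hpair with ⟨h1, h2⟩ | ⟨h1, h2⟩
    · -- matched: a = π'(2k+1) = π''(2k+1), so j = 2k+1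
      have hj2 : j = 2 * k + 1 := by
        have : (⟨2 * k + 1, hk1⟩ : Fin n) = ⟨j, by omega⟩ :=
          π''.injective (by rw [← h2]; exact ha)
        exact ((Fin.mk.injEq _ _ _ _).mp this).symm
      subst hj2
      have hp2 := hc' (2 * k + 1 + 1) (2 * k + 1 + 2) (by omega) hj (k + 1)
        (by ring) (by ring)
      rw [Sym2.eq_iff] at hp2
      rcases hp2 with ⟨h3, h4⟩ | ⟨h3, h4⟩
      · exact hxv h3
      · exact hxw h3
    · -- swapped: a = π'(2k+1) = π''(2k), so j = 2k
      have hj2 : j = 2 * k := by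
        have : (⟨2 * k, by omega⟩ : Fin n) = ⟨j, by omega⟩ :=
          π''.injective (by rw [← h2]; exact ha)
        exact ((Fin.mk.injEq _ _ _ _).mp this).symm
      subst hj2
      have hp2 := hc' (2 * k + 1 + 1) (2 * k + 1 + 2) (by omega) hi (k + 1)
        (by ring) (by ring)
      rw [Sym2.eq_iff] at hp2
      rcases hp2 with ⟨h3, h4⟩ | ⟨h3, h4⟩
      · exact hxw h3
      · exact hyw h4
end

section
/- For all sufficiently large n, the number of permutations π of [n] that are not two-separated from the identity permutation ι is at most 4 · C(n−1, 5) · n^8 · 5^{n−8}, where C(n−1, 5) is the binomial coefficient; in particular this number is at most n^{13} · 5^{n−10}. -/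
private lemma choose5 (n : ℕ) : 120 * Nat.choose n 5 ≤ n ^ 5 := by
  have h := Nat.descFactorial_eq_factorial_mul_choose n 5
  have h2 := Nat.descFactorial_le_pow n 5
  have h3 : Nat.factorial 5 = 120 := by decide
  rw [h3] at h; omega

private lemma auxpow : ∀ m : ℕ, m * 4 ^ (m - 1) ≤ 5 ^ m := by
  intro m
  induction m with
  | zero => simp
  | succ k ih =>
    rcases Nat.lt_or_ge k 4 with hk | hk
    · interval_cases k <;> decide
    · have h1 : (k + 1) * 4 ≤ 5 * k := by omega
      calc (k+1) * 4 ^ (k+1-1) = (k+1) * 4 * 4 ^ (k-1) := by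
            rw [Nat.mul_assoc, ← pow_succ']
            congr 2
            omega
        _ ≤ 5 * k * 4 ^ (k-1) := Nat.mul_le_mul_right _ h1
        _ = 5 * (k * 4 ^ (k-1)) := by ring
        _ ≤ 5 * 5 ^ k := Nat.mul_le_mul_left _ ih
        _ = 5 ^ (k+1) := by rw [← pow_succ']

private lemma card4' {α : Type*} [DecidableEq α] {a b c d : α} (h1 : a ≠ b) (h2 : a ≠ c)
    (h3 : a ≠ d) (h4 : b ≠ c) (h5 : b ≠ d) (h6 : c ≠ d) :
    ({a, b, c, d} : Finset α).card = 4 := by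
  rw [Finset.card_insert_of_notMem (by simp [h1, h2, h3]),
    Finset.card_insert_of_notMem (by simp [h4, h5]),
    Finset.card_insert_of_notMem (by simp [h6]), Finset.card_singleton]

private lemma not_ts_cases {n : ℕ} {π : Equiv.Perm (Fin n)}
    (h : ¬ TwoSeparated n π (Equiv.refl (Fin n)))
    {i j : ℕ} (hi : i + 2 < n) (hj : j + 2 < n)
    (hij : π ⟨i, by omega⟩ = ⟨j, by omega⟩) :
    π ⟨i+1, by omega⟩ = ⟨j+1, by omega⟩ ∨ π ⟨i+1, by omega⟩ = ⟨j+2, hj⟩ ∨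
    π ⟨i+2, hi⟩ = ⟨j+1, by omega⟩ ∨ π ⟨i+2, hi⟩ = ⟨j+2, hj⟩ := by
  by_contra hc
  push_neg at hc
  obtain ⟨h1, h2, h3, h4⟩ := hc
  apply h
  refine ⟨i, j, hi, hj, by simpa using hij, ?_⟩
  simp only [Equiv.refl_apply]
  refine card4' ?_ h1 h2 h3 h4 ?_
  · intro hcontra
    have := π.injective hcontra
    simp [Fin.ext_iff] at this
  · simp [Fin.ext_iff]

private def symb {n : ℕ} (π : Equiv.Perm (Fin n)) (v : Fin n) : Fin 4 :=
  if h : (v : ℕ) + 2 < n ∧ ((π.symm v : ℕ)) + 2 < n then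
    if π ⟨(π.symm v : ℕ) + 1, by omega⟩ = ⟨(v : ℕ) + 1, by omega⟩ then 0
    else if π ⟨(π.symm v : ℕ) + 1, by omega⟩ = ⟨(v : ℕ) + 2, h.1⟩ then 1
    else if π ⟨(π.symm v : ℕ) + 2, h.2⟩ = ⟨(v : ℕ) + 1, by omega⟩ then 2
    else 3
  else 0

private def decodeSymb : Fin 4 → ℕ × ℕ
  | 0 => (1, 1)
  | 1 => (1, 2)
  | 2 => (2, 1)
  | 3 => (2, 2)

private lemma symb_spec {n : ℕ} {π : Equiv.Perm (Fin n)}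
    (hπ : ¬ TwoSeparated n π (Equiv.refl (Fin n))) (v : Fin n)
    (h1 : (v : ℕ) + 2 < n) (h2 : ((π.symm v : ℕ)) + 2 < n) :
    ∃ b c : ℕ, ∃ _ : 1 ≤ b ∧ b ≤ 2, ∃ _ : 1 ≤ c ∧ c ≤ 2,
      decodeSymb (symb π v) = (b, c) ∧
      π ⟨(π.symm v : ℕ) + b, by omega⟩ = ⟨(v : ℕ) + c, by omega⟩ := by
  have hij : π ⟨(π.symm v : ℕ), by omega⟩ = ⟨(v : ℕ), by omega⟩ := by
    simpa [Fin.eta] using π.apply_symm_apply v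
  have hdisj := not_ts_cases hπ h2 h1 hij
  rw [symb, dif_pos ⟨h1, h2⟩]
  split_ifs with hA hB hC
  · exact ⟨1, 1, by norm_num, by norm_num, by norm_num [decodeSymb], hA⟩
  · exact ⟨1, 2, by norm_num, by norm_num, by norm_num [decodeSymb], hB⟩
  · exact ⟨2, 1, by norm_num, by norm_num, by norm_num [decodeSymb], hC⟩
  · refine ⟨2, 2, by norm_num, by norm_num, by norm_num [decodeSymb], ?_⟩
    rcases hdisj with h | h | h | h
    · exact absurd h hA
    · exact absurd h hB
    · exact absurd h hC
    · exact h

private def enc {n : ℕ} (hn : 2 ≤ n) (π : Equiv.Perm (Fin n)) :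
    Fin n × Fin n × Fin n × Fin n × (Fin n → Fin 4) :=
  (π.symm ⟨n - 1, by omega⟩, π.symm ⟨n - 2, by omega⟩,
   π ⟨n - 2, by omega⟩, π ⟨n - 1, by omega⟩, symb π)

set_option maxHeartbeats 2000000 in
private lemma enc_inj {n : ℕ} (hn : 2 ≤ n) {π π' : Equiv.Perm (Fin n)}
    (hπ : ¬ TwoSeparated n π (Equiv.refl (Fin n)))
    (hπ' : ¬ TwoSeparated n π' (Equiv.refl (Fin n)))
    (h : enc hn π = enc hn π') : π = π' := by
  rw [enc, enc, Prod.mk.injEq, Prod.mk.injEq, Prod.mk.injEq, Prod.mk.injEq] at h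
  obtain ⟨e1, e2, e3, e4, e5⟩ := h
  have posval : ∀ (σ : Equiv.Perm (Fin n)) (v : Fin n) (m : ℕ) (hm : m < n),
      (σ.symm v : ℕ) = m → σ ⟨m, hm⟩ = v := by
    intro σ v m hm he
    have : σ.symm v = ⟨m, hm⟩ := Fin.ext he
    rw [← this, Equiv.apply_symm_apply]
  have valpos : ∀ (σ : Equiv.Perm (Fin n)) (v : Fin n) (m : ℕ) (hm : m < n),
      σ ⟨m, hm⟩ = v → (σ.symm v : ℕ) = m := by
    intro σ v m hm he
    rw [← he, Equiv.symm_apply_apply]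
  have key : ∀ k : ℕ, ∀ v : Fin n, (v : ℕ) + k + 1 = n → π.symm v = π'.symm v := by
    intro k
    induction k using Nat.strong_induction_on with
    | _ k ih =>
      intro v hv
      rcases Nat.lt_or_ge k 2 with hk | hk
      · interval_cases k
        · have : v = ⟨n - 1, by omega⟩ := Fin.ext (by simp; omega)
          rw [this]; exact e1
        · have : v = ⟨n - 2, by omega⟩ := Fin.ext (by simp; omega)
          rw [this]; exact e2
      · have hv2 : (v : ℕ) + 2 < n := by omega
        by_cases hc1 : (π.symm v : ℕ) = n - 2
        · have h3 : π' ⟨n - 2, by omega⟩ = v := by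
            rw [← e3]; exact posval π v _ _ hc1
          have h4 := valpos π' v _ (by omega) h3
          exact Fin.ext (by rw [hc1, h4])
        by_cases hc2 : (π.symm v : ℕ) = n - 1
        · have h3 : π' ⟨n - 1, by omega⟩ = v := by
            rw [← e4]; exact posval π v _ _ hc2
          have h4 := valpos π' v _ (by omega) h3
          exact Fin.ext (by rw [hc2, h4])
        have hi2 : (π.symm v : ℕ) + 2 < n := by
          have := (π.symm v).isLt; omega
        have hc1' : (π'.symm v : ℕ) ≠ n - 2 := by
          intro hc
          exact hc1 (valpos π v _ (by omega) (by rw [e3]; exact posval π' v _ _ hc))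
        have hc2' : (π'.symm v : ℕ) ≠ n - 1 := by
          intro hc
          exact hc2 (valpos π v _ (by omega) (by rw [e4]; exact posval π' v _ _ hc))
        have hi2' : (π'.symm v : ℕ) + 2 < n := by
          have := (π'.symm v).isLt; omega
        obtain ⟨b, c, hb, hc, hdec, heq⟩ := symb_spec hπ v hv2 hi2
        obtain ⟨b', c', hb', hc', hdec', heq'⟩ := symb_spec hπ' v hv2 hi2'
        have hsymb : symb π v = symb π' v := congrFun e5 v
        have hpair : (b, c) = (b', c') := by rw [← hdec, ← hdec', hsymb]
        have hbb : b = b' := congrArg Prod.fst hpair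
        have hcc : c = c' := congrArg Prod.snd hpair
        subst hbb; subst hcc
        have hw : ((v : ℕ) + c) < n := by omega
        have hIH := ih (k - c) (by omega) ⟨(v : ℕ) + c, hw⟩
          (by show ((v : ℕ) + c) + (k - c) + 1 = n; omega)
        have hA : (π.symm ⟨(v : ℕ) + c, hw⟩ : ℕ) = (π.symm v : ℕ) + b :=
          valpos π _ _ (by omega) heq
        have hB : (π'.symm ⟨(v : ℕ) + c, hw⟩ : ℕ) = (π'.symm v : ℕ) + b :=
          valpos π' _ _ (by omega) heq'
        have hval : (π.symm (⟨(v : ℕ) + c, hw⟩ : Fin n) : ℕ)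
            = (π'.symm (⟨(v : ℕ) + c, hw⟩ : Fin n) : ℕ) := by rw [hIH]
        apply Fin.ext
        omega
  have hsymm : π.symm = π'.symm := by
    apply Equiv.ext
    intro v
    exact key (n - 1 - (v : ℕ)) v (by have := v.isLt; omega)
  rw [← Equiv.symm_symm π, hsymm, Equiv.symm_symm]


/-- For all sufficiently large `n`, the number of permutations of `[n]` not
two-separated from the identity permutation is at most
`4 · C(n−1, 5) · n^8 · 5^(n−8)`, and in particular at most `n^13 · 5^(n−10)`. -/
theorem stmt17 :
    ∃ N : ℕ, ∀ n : ℕ, N ≤ n →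
      Nat.card {π : Equiv.Perm (Fin n) // ¬ TwoSeparated n π (Equiv.refl (Fin n))}
          ≤ 4 * Nat.choose (n - 1) 5 * n ^ 8 * 5 ^ (n - 8) ∧
      Nat.card {π : Equiv.Perm (Fin n) // ¬ TwoSeparated n π (Equiv.refl (Fin n))}
          ≤ n ^ 13 * 5 ^ (n - 10) := by
  refine ⟨100, fun n hn => ?_⟩
  have hn2 : 2 ≤ n := by omega
  have hcard : Nat.card {π : Equiv.Perm (Fin n) // ¬ TwoSeparated n π (Equiv.refl (Fin n))}
      ≤ n ^ 4 * 4 ^ n := by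
    have hinj : Function.Injective
        (fun π : {π : Equiv.Perm (Fin n) // ¬ TwoSeparated n π (Equiv.refl (Fin n))} =>
          enc hn2 π.1) := by
      intro a b hab
      exact Subtype.ext (enc_inj hn2 a.2 b.2 hab)
    calc Nat.card {π : Equiv.Perm (Fin n) // ¬ TwoSeparated n π (Equiv.refl (Fin n))}
        ≤ Nat.card (Fin n × Fin n × Fin n × Fin n × (Fin n → Fin 4)) :=
          Nat.card_le_card_of_injective _ hinj
      _ = n ^ 4 * 4 ^ n := by
          simp [Nat.card_eq_fintype_card]
          ring
  have haux := auxpow (n - 8)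
  have h9 : n - 8 - 1 = n - 9 := by omega
  rw [h9] at haux
  have hA : n ^ 4 * 4 ^ 9 ≤ n ^ 8 * (n - 8) := by
    have h100 : (100 : ℕ) ^ 4 ≤ n ^ 4 := Nat.pow_le_pow_left (by omega) 4
    have h8 : n ^ 8 = n ^ 4 * n ^ 4 := by rw [← pow_add]
    have h49 : (4 : ℕ) ^ 9 ≤ n ^ 4 * (n - 8) := by
      calc (4 : ℕ) ^ 9 ≤ 100 ^ 4 * 92 := by norm_num
        _ ≤ n ^ 4 * (n - 8) := Nat.mul_le_mul h100 (by omega)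
    calc n ^ 4 * 4 ^ 9 ≤ n ^ 4 * (n ^ 4 * (n - 8)) := Nat.mul_le_mul_left _ h49
      _ = n ^ 8 * (n - 8) := by rw [h8]; ring
  have hstep : n ^ 4 * 4 ^ n ≤ n ^ 8 * 5 ^ (n - 8) := by
    have hsplit : 4 ^ n = 4 ^ 9 * 4 ^ (n - 9) := by
      rw [← pow_add]; congr 1; omega
    calc n ^ 4 * 4 ^ n = (n ^ 4 * 4 ^ 9) * 4 ^ (n - 9) := by rw [hsplit]; ring
      _ ≤ (n ^ 8 * (n - 8)) * 4 ^ (n - 9) := Nat.mul_le_mul_right _ hA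
      _ = n ^ 8 * ((n - 8) * 4 ^ (n - 9)) := by ring
      _ ≤ n ^ 8 * 5 ^ (n - 8) := Nat.mul_le_mul_left _ haux
  have hC1 : 0 < Nat.choose (n - 1) 5 := Nat.choose_pos (by omega)
  have hfirst : Nat.card {π : Equiv.Perm (Fin n) // ¬ TwoSeparated n π (Equiv.refl (Fin n))}
      ≤ 4 * Nat.choose (n - 1) 5 * n ^ 8 * 5 ^ (n - 8) := by
    calc Nat.card {π : Equiv.Perm (Fin n) // ¬ TwoSeparated n π (Equiv.refl (Fin n))}
        ≤ n ^ 4 * 4 ^ n := hcard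
      _ ≤ n ^ 8 * 5 ^ (n - 8) := hstep
      _ = 1 * n ^ 8 * 5 ^ (n - 8) := by ring
      _ ≤ 4 * Nat.choose (n - 1) 5 * n ^ 8 * 5 ^ (n - 8) := by
          refine Nat.mul_le_mul_right _ (Nat.mul_le_mul_right _ ?_)
          omega
  refine ⟨hfirst, le_trans hfirst ?_⟩
  have hch : 120 * Nat.choose (n - 1) 5 ≤ n ^ 5 :=
    le_trans (choose5 (n - 1)) (Nat.pow_le_pow_left (by omega) 5)
  have hsplit2 : 5 ^ (n - 8) = 25 * 5 ^ (n - 10) := by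
    rw [show (25 : ℕ) = 5 ^ 2 by norm_num, ← pow_add]
    congr 1; omega
  calc 4 * Nat.choose (n - 1) 5 * n ^ 8 * 5 ^ (n - 8)
      = (100 * Nat.choose (n - 1) 5) * (n ^ 8 * 5 ^ (n - 10)) := by rw [hsplit2]; ring
    _ ≤ n ^ 5 * (n ^ 8 * 5 ^ (n - 10)) := Nat.mul_le_mul_right _ (by omega)
    _ = n ^ 13 * 5 ^ (n - 10) := by ring
end
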